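/- Let n ≥ 1 be an integer, Q ∈ ℂ[x,z] a polynomial, and set P = x^n y − Q(x,z) ∈ ℂ[x,y,z]. Let B ∈ ℂ[x,y,z] be a polynomial such that for infinitely many constants c ∈ ℂ there exist polynomials r_c(x) ∈ ℂ[x] and s_c ∈ ℂ[x,y,z] with B = r_c(x) + s_c·(P − c). Then B belongs to the ℂ-subalgebra of ℂ[x,y,z] generated by x and P, i.e. B ∈ ℂ[x, x^n y − Q(x,z)]. -/

import Mathlib

open MvPolynomial

noncomputable section

/-- The polynomial ring `ℂ[x,y,z]`, with `X 0 = x`, `X 1 = y`, `X 2 = z`. -/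
abbrev R3 := MvPolynomial (Fin 3) ℂ

/-- The polynomial ring `ℂ[x,z]`, with `X 0 = x`, `X 1 = z`. -/
abbrev R2 := MvPolynomial (Fin 2) ℂ

/-- The embedding `ℂ[x,z] → ℂ[x,y,z]`, `x ↦ x`, `z ↦ z`. -/
def toXYZ : R2 →ₐ[ℂ] R3 := aeval ![X 0, X 2]

/-- The defining polynomial `x^n y - Q(x,z)` of the Danielewski hypersurface `X_{Q,n}`. -/
def danPoly (Q : R2) (n : ℕ) : R3 := X 0 ^ n * X 1 - toXYZ Q

/-- The coordinate ring `S_{Q,n} = ℂ[x,y,z]/(x^n y - Q(x,z))`. -/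
abbrev danRing (Q : R2) (n : ℕ) := R3 ⧸ Ideal.span {danPoly Q n}

/-- The quotient projection `ℂ[x,y,z] → S_{Q,n}`. -/
def danProj (Q : R2) (n : ℕ) : R3 →ₐ[ℂ] danRing Q n := Ideal.Quotient.mkₐ ℂ _

/-- `Q(0,z)` as a univariate polynomial in `z`. -/
def Q0 (Q : R2) : Polynomial ℂ := aeval ![0, Polynomial.X] Q

/-- A derivation is locally nilpotent if every element is killed by some iterate. -/
def IsLND {A : Type*} [CommRing A] [Algebra ℂ A] (δ : Derivation ℂ A A) : Prop :=
  ∀ a : A, ∃ m : ℕ, 1 ≤ m ∧ (⇑δ)^[m] a = 0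

/-- Two Danielewski hypersurfaces are equivalent if some algebra automorphism of
`ℂ[x,y,z]` maps the ideal `(x^{n₁} y - Q₁)` onto the ideal `(x^{n₂} y - Q₂)`. -/
def DanEquiv (Q₁ : R2) (n₁ : ℕ) (Q₂ : R2) (n₂ : ℕ) : Prop :=
  ∃ Φ : R3 ≃ₐ[ℂ] R3,
    Ideal.map Φ.toAlgHom.toRingHom (Ideal.span {danPoly Q₁ n₁}) = Ideal.span {danPoly Q₂ n₂}

/-- `X_{Q,n}` is in standard form if `Q = p(z) + x q(x,z)` with `deg_z q < deg p`. -/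
def IsStandardForm (Q : R2) : Prop :=
  ∃ (p : Polynomial ℂ) (q : R2),
    Q = Polynomial.aeval (X 1) p + X 0 * q ∧ (q = 0 ∨ degreeOf 1 q < p.natDegree)

/-- `X_{Q,n}` is in reduced standard form if moreover `deg_x Q < n` and
`deg_z q < deg p - 1`. -/
def IsReducedStandardForm (Q : R2) (n : ℕ) : Prop :=
  degreeOf 0 Q < n ∧
  ∃ (p : Polynomial ℂ) (q : R2),
    Q = Polynomial.aeval (X 1) p + X 0 * q ∧ (q = 0 ∨ degreeOf 1 q < p.natDegree - 1)

/-!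
Since `x^n y = P + Q(x,z)`, some `x^N B` equals `F(P)` for a polynomial `F ∈ ℂ[x,z][T]`.
For each admissible `c`, `F(c) ≡ F(P) = x^N B ≡ x^N r_c(x)` modulo `P - c`, and `P - c`, being of
degree one in `y`, divides no nonzero element of `ℂ[x,z]`; hence `F(c) ∈ x^N ℂ[x]`. As this holds
for infinitely many `c`, every coefficient of `F` lies in `x^N ℂ[x]`, and cancelling `x^N` writes
`B` as a polynomial in `x` and `P`.
-/

namespace Polynomial

theorem linearMap_coeff_eq_zero_of_infinite {K A : Type*} [CommRing K] [IsDomain K] [Semiring A]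
    [Algebra K A] (φ : A →ₗ[K] K) (F : A[X])
    (h : {c : K | φ (F.eval (algebraMap K A c)) = 0}.Infinite) (j : ℕ) :
    φ (F.coeff j) = 0 := by
  set p : K[X] := ∑ k ∈ Finset.range (F.natDegree + 1), C (φ (F.coeff k)) * X ^ k
  have hp_eval (c : K) : p.eval c = φ (F.eval (algebraMap K A c)) := by
    rw [eval_eq_sum_range (p := F)]
    simp only [p, eval_finsetSum, map_sum, eval_mul, eval_C, eval_pow, eval_X,
      ← map_pow, ← Algebra.commutes, ← Algebra.smul_def, map_smul, smul_eq_mul, mul_comm]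
  have hp : p = 0 := eq_zero_of_infinite_isRoot p (by simpa only [IsRoot, hp_eval] using h)
  have hcoeff := congrArg (coeff · j) hp
  simp only [p, finsetSum_coeff, coeff_C_mul_X_pow, Finset.sum_ite_eq, Finset.mem_range,
    coeff_zero] at hcoeff
  split_ifs at hcoeff with hj
  · exact hcoeff
  · rw [coeff_eq_zero_of_natDegree_lt (by omega), map_zero]

theorem coeff_mem_of_infinite_eval_mem {K A : Type*} [Field K] [Ring A] [Algebra K A]
    (M : Submodule K A) (F : A[X]) (h : {c : K | F.eval (algebraMap K A c) ∈ M}.Infinite)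
    (j : ℕ) : F.coeff j ∈ M := by
  by_contra hj
  obtain ⟨φ, hφj, hφM⟩ := M.exists_dual_map_eq_bot_of_notMem hj inferInstance
  refine hφj (linearMap_coeff_eq_zero_of_infinite φ F (h.mono fun c hc => ?_) j)
  simpa [hφM] using Submodule.mem_map_of_mem (f := φ) hc

end Polynomial

/-- `ℂ[x,y,z] → ℂ[x,z][y]`, with `y` as the polynomial variable. -/
def polyInY : R3 →ₐ[ℂ] Polynomial R2 := aeval ![.C (X 0), .X, .C (X 1)]

lemma polyInY_toXYZ (g : R2) : polyInY (toXYZ g) = .C g := by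
  have h : polyInY.comp toXYZ = (Polynomial.CAlgHom : R2 →ₐ[ℂ] Polynomial R2) := by
    apply MvPolynomial.algHom_ext
    intro i
    fin_cases i <;> simp [polyInY, toXYZ]
  exact DFunLike.congr_fun h g

lemma natDegree_polyInY_danPoly_sub_C (Q : R2) (n : ℕ) (c : ℂ) :
    (polyInY (danPoly Q n - C c)).natDegree = 1 := by
  have h : polyInY (danPoly Q n - C c) = .C (X 0 ^ n) * .X + .C (-(Q + C c)) := by
    rw [danPoly, map_sub, map_sub, polyInY_toXYZ]
    simp [polyInY, MvPolynomial.algebraMap_eq]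
    ring
  rw [h, Polynomial.natDegree_linear (pow_ne_zero _ (X_ne_zero 0))]

theorem eq_zero_of_danPoly_sub_C_dvd {Q : R2} {n : ℕ} {c : ℂ} {g : R2}
    (h : danPoly Q n - C c ∣ toXYZ g) : g = 0 := by
  by_contra hg
  have hdeg := Polynomial.natDegree_le_of_dvd (map_dvd polyInY h)
    (by rwa [polyInY_toXYZ, Polynomial.C_ne_zero])
  rw [natDegree_polyInY_danPoly_sub_C, polyInY_toXYZ, Polynomial.natDegree_C] at hdeg
  omega

@[simp]
lemma toXYZ_X0 : toXYZ (X 0) = X 0 := by simp [toXYZ]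

@[simp]
lemma toXYZ_X1 : toXYZ (X 1) = X 2 := by simp [toXYZ]

theorem exists_X0_pow_mul_eq_eval₂_danPoly (Q : R2) (n : ℕ) (B : R3) :
    ∃ (N : ℕ) (F : Polynomial R2), F.eval₂ (toXYZ : R2 →+* R3) (danPoly Q n) = X 0 ^ N * B := by
  induction B using MvPolynomial.induction_on with
  | C a => exact ⟨0, .C (C a), by simp⟩
  | add B₁ B₂ h₁ h₂ =>
    obtain ⟨N₁, F₁, hF₁⟩ := h₁
    obtain ⟨N₂, F₂, hF₂⟩ := h₂
    refine ⟨N₁ + N₂, .C (X 0 ^ N₂) * F₁ + .C (X 0 ^ N₁) * F₂, ?_⟩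
    simp only [Polynomial.eval₂_add, Polynomial.eval₂_mul, Polynomial.eval₂_C, hF₁, hF₂]
    simp only [RingHom.coe_coe, map_pow, toXYZ_X0]
    ring
  | mul_X B i h =>
    obtain ⟨N, F, hF⟩ := h
    fin_cases i
    · exact ⟨N, F * .C (X 0), by simp [hF]; ring⟩
    · refine ⟨N + n, F * (.X + .C Q), ?_⟩
      simp only [Polynomial.eval₂_mul, Polynomial.eval₂_add, Polynomial.eval₂_C,
        Polynomial.eval₂_X, hF, RingHom.coe_coe]
      simp only [danPoly, sub_add_cancel, Fin.mk_one]
      ring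
    · exact ⟨N, F * .C (X 1), by simp [hF]; ring⟩

/-- The subspace `x^N ℂ[x]` of `ℂ[x,z]`. -/
def xPowMulPolyX (N : ℕ) : Submodule ℂ R2 :=
  (Subalgebra.toSubmodule (Algebra.adjoin ℂ {X 0})).map (LinearMap.mulLeft ℂ (X 0 ^ N))

theorem eval_C_mem_xPowMulPolyX {Q : R2} {n N : ℕ} {B : R3} {F : Polynomial R2}
    (hF : F.eval₂ (toXYZ : R2 →+* R3) (danPoly Q n) = X 0 ^ N * B) {c : ℂ}
    (hc : ∃ (r : Polynomial ℂ) (s : R3),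
      B = Polynomial.aeval (X 0 : R3) r + s * (danPoly Q n - C c)) :
    F.eval (algebraMap ℂ R2 c) ∈ xPowMulPolyX N := by
  obtain ⟨r, s, hB⟩ := hc
  have hsub : danPoly Q n - C c ∣
      F.eval₂ (toXYZ : R2 →+* R3) (danPoly Q n) - F.eval₂ (toXYZ : R2 →+* R3) (C c) := by
    simpa only [Polynomial.eval_map] using
      Polynomial.sub_dvd_eval_sub _ _ (F.map (toXYZ : R2 →+* R3))
  have hdiff : toXYZ (F.eval (C c) - X 0 ^ N * Polynomial.aeval (X 0) r) =
      X 0 ^ N * s * (danPoly Q n - C c) -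
        (F.eval₂ (toXYZ : R2 →+* R3) (danPoly Q n) - F.eval₂ (toXYZ : R2 →+* R3) (C c)) := by
    have heval : toXYZ (F.eval (C c)) = F.eval₂ (toXYZ : R2 →+* R3) (C c) := by
      simpa using (Polynomial.eval₂_hom (p := F) (toXYZ : R2 →+* R3) (C c)).symm
    rw [hF, hB, map_sub, map_mul, map_pow, toXYZ_X0, ← Polynomial.aeval_algHom_apply, toXYZ_X0,
      heval]
    ring
  have hFc : F.eval (C c) = X 0 ^ N * Polynomial.aeval (X 0) r :=
    sub_eq_zero.mp <| eq_zero_of_danPoly_sub_C_dvd <| hdiff ▸ (dvd_mul_left _ _).sub hsub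
  exact ⟨_, Polynomial.aeval_mem_adjoin_singleton ℂ _, hFc.symm⟩

theorem mem_adjoin_of_eval₂_danPoly {Q : R2} {n N : ℕ} {B : R3} {F : Polynomial R2}
    (hF : F.eval₂ (toXYZ : R2 →+* R3) (danPoly Q n) = X 0 ^ N * B)
    (hcoeff : ∀ j, F.coeff j ∈ xPowMulPolyX N) :
    B ∈ Algebra.adjoin ℂ ({X 0, danPoly Q n} : Set R3) := by
  choose u hu hFu using hcoeff
  have hB : X 0 ^ N * B = X 0 ^ N * ∑ j ∈ F.support, toXYZ (u j) * danPoly Q n ^ j := by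
    rw [← hF, Polynomial.eval₂_eq_sum, Polynomial.sum, Finset.mul_sum]
    refine Finset.sum_congr rfl fun j _ => ?_
    rw [← hFu j]
    simp [mul_assoc]
  rw [mul_left_cancel₀ (pow_ne_zero N (X_ne_zero 0)) hB]
  have hmap :
      (Algebra.adjoin ℂ {X 0}).map toXYZ ≤ Algebra.adjoin ℂ ({X 0, danPoly Q n} : Set R3) := by
    rw [AlgHom.map_adjoin, Set.image_singleton, toXYZ_X0]
    exact Algebra.adjoin_mono (Set.singleton_subset_iff.mpr (Set.mem_insert _ _))
  refine Subalgebra.sum_mem _ fun j _ => mul_mem (hmap ⟨u j, hu j, rfl⟩) (pow_mem ?_ j)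
  exact Algebra.subset_adjoin (Set.mem_insert_of_mem _ rfl)

theorem stmt_18_general (n : ℕ) (Q : R2) (B : R3)
    (hB : {c : ℂ | ∃ (r : Polynomial ℂ) (s : R3),
        B = Polynomial.aeval (X 0 : R3) r + s * (danPoly Q n - C c)}.Infinite) :
    B ∈ Algebra.adjoin ℂ ({X 0, danPoly Q n} : Set R3) := by
  obtain ⟨N, F, hF⟩ := exists_X0_pow_mul_eq_eval₂_danPoly Q n B
  refine mem_adjoin_of_eval₂_danPoly hF fun j => ?_
  exact Polynomial.coeff_mem_of_infinite_eval_mem (K := ℂ) (xPowMulPolyX N) F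
    (hB.mono fun _ hc => eval_C_mem_xPowMulPolyX hF hc) j

/-- if `B = r_c(x) + s_c (P - c)` for infinitely many `c ∈ ℂ`, where
`P = x^n y - Q(x,z)`, then `B ∈ ℂ[x, P]`. -/
theorem stmt_18 (n : ℕ) (hn : 1 ≤ n) (Q : R2) (B : R3)
    (hB : {c : ℂ | ∃ (r : Polynomial ℂ) (s : R3),
        B = Polynomial.aeval (X 0 : R3) r + s * (danPoly Q n - C c)}.Infinite) :
    B ∈ Algebra.adjoin ℂ ({X 0, danPoly Q n} : Set R3) :=
  stmt_18_general n Q B hB
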